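/- For all integers d ≥ 1 and n ≥ d + 1, setting P_{n,d} := W_{n,d} · W_{n,d}ᵀ, one has P_{n,d}² = n · P_{n,d} and rank(P_{n,d}) = C(n−1, d). Consequently the eigenvalues of P_{n,d} are n with multiplicity C(n−1, d) and 0 with multiplicity C(n−1, d−1). -/

import Mathlib

open Matrix Polynomial

/-- `S(G)`: real symmetric matrices whose off-diagonal zero/nonzero pattern
matches the adjacency of `G`; the diagonal is unconstrained. -/
def Sset {V : Type*} [Fintype V] [DecidableEq V] (G : SimpleGraph V) : Set (Matrix V V ℝ) :=
  {M | M.IsSymm ∧ ∀ u v : V, u ≠ v → (M u v ≠ 0 ↔ G.Adj u v)}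

/-- `q(G)`: the minimum number of distinct eigenvalues over matrices in `S(G)`. -/
noncomputable def minQ {V : Type*} [Fintype V] [DecidableEq V] (G : SimpleGraph V) : ℕ :=
  sInf {k : ℕ | ∃ M ∈ Sset G, (spectrum ℝ M).ncard = k}

/-- The Johnson graph `J(n,d)`: vertices are the `d`-element subsets of an `n`-set,
adjacent iff their symmetric difference has two elements. -/
def Johnson (n d : ℕ) : SimpleGraph {s : Finset (Fin n) // s.card = d} where
  Adj α β := (symmDiff α.1 β.1).card = 2
  symm := ⟨by intro a b h; rwa [symmDiff_comm]⟩
  loopless := ⟨by intro a h; simp [symmDiff_self] at h⟩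

/-- For `d`-subsets `α, β` with `α ∆ β = {i, j}`, `i < j`, this is
`h(α,β) = |{ℓ ∈ α ∩ β : i < ℓ < j}|`. -/
def hjExp {n : ℕ} (α β : Finset (Fin n)) : ℕ :=
  ((α ∩ β).filter (fun l => (∃ i ∈ symmDiff α β, i < l) ∧ ∃ j ∈ symmDiff α β, l < j)).card

/-- The signed adjacency matrix `A_{n,d}` of the Johnson graph `J(n,d)`:
`A(α,β) = (-1)^{h(α,β)}` when `|α ∆ β| = 2` and `0` otherwise. -/
def Ajohnson (n d : ℕ) :
    Matrix {s : Finset (Fin n) // s.card = d} {s : Finset (Fin n) // s.card = d} ℝ :=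
  fun α β => if (symmDiff α.1 β.1).card = 2 then (-1 : ℝ) ^ hjExp α.1 β.1 else 0

/-- The matrix `W_{n,d}`, rows indexed by `d`-subsets and columns by `(d+1)`-subsets of
an `n`-set: `W(α,β) = (-1)^{|{y ∈ β : y < x}|}` when `α ⊆ β` with `β \ α = {x}`, else `0`. -/
def Wj (n d : ℕ) :
    Matrix {s : Finset (Fin n) // s.card = d} {s : Finset (Fin n) // s.card = d + 1} ℝ :=
  fun α β => if α.1 ⊆ β.1 then
      (-1 : ℝ) ^ ((β.1.filter (fun y => ∃ x ∈ β.1 \ α.1, y < x)).card)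
    else 0

/-- `P_{n,d} := W_{n,d} · W_{n,d}ᵀ`. -/
noncomputable def Pj (n d : ℕ) := Wj n d * (Wj n d)ᵀ

/-!
Read as a map from `(d+1)`-subsets to `d`-subsets, `W_{n,d}` is the simplicial boundary of the
full simplex on `n` vertices, so `W_{n,d} W_{n,d+1} = 0`, and the Hodge Laplacian
`W_{n,d}ᵀ W_{n,d} + W_{n,d+1} W_{n,d+1}ᵀ` is `n • 1`: on the diagonal a `(d+1)`-set has `d + 1`
facets and `n - d - 1` cofacets, off the diagonal the two contributions cancel. Hence
`P² = W_{n,d} (n • 1 - W_{n,d+1} W_{n,d+1}ᵀ) W_{n,d}ᵀ = n • P`. Being symmetric with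
`P² = n • P`, `P` has eigenvalues in `{0, n}`, and its trace `(n - d) C(n, d) = n C(n - 1, d)`
counts the eigenvalue `n`; this gives the rank and the characteristic polynomial.
-/

namespace Matrix.IsHermitian

open Finset

variable {𝕜 ι : Type*} [RCLike 𝕜] [Fintype ι] [DecidableEq ι] {A : Matrix ι ι 𝕜} {c : ℝ}

theorem eigenvalues_eq_zero_or_eq_of_mul_self_eq_smul (hA : A.IsHermitian)
    (h : A * A = (c : 𝕜) • A) (i : ι) :
    hA.eigenvalues i = 0 ∨ hA.eigenvalues i = c := by
  set μ := hA.eigenvalues i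
  set v := ⇑(hA.eigenvectorBasis i)
  have hv : A *ᵥ v = μ • v := hA.mulVec_eigenvectorBasis i
  have hv0 : v ≠ 0 := (WithLp.ofLp_eq_zero 2).ne.2 (hA.eigenvectorBasis.orthonormal.ne_zero i)
  have hquad : (μ * (μ - c)) • v = 0 := by
    have h1 := congrArg (· *ᵥ v) h
    simp only [← mulVec_mulVec, hv, mulVec_smul, smul_mulVec, smul_smul] at h1
    rw [← RCLike.real_smul_eq_coe_smul (K := 𝕜), smul_smul] at h1
    rw [mul_sub, sub_smul, h1, mul_comm, sub_self]
  simpa [hv0, sub_eq_zero] using hquad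

theorem rank_eq_card_eigenvalues_eq_of_mul_self_eq_smul (hA : A.IsHermitian)
    (h : A * A = (c : 𝕜) • A) (hc : c ≠ 0) :
    A.rank = #{i | hA.eigenvalues i = c} := by
  rw [hA.rank_eq_card_non_zero_eigs, Fintype.card_subtype]
  congr 1
  refine filter_congr fun i _ => ?_
  rcases hA.eigenvalues_eq_zero_or_eq_of_mul_self_eq_smul h i with hi | hi <;>
    simp [hi, hc, hc.symm]

theorem trace_eq_rank_mul_of_mul_self_eq_smul (hA : A.IsHermitian)
    (h : A * A = (c : 𝕜) • A) (hc : c ≠ 0) :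
    A.trace = A.rank * c := by
  have hμ (i : ι) : (hA.eigenvalues i : 𝕜) = if hA.eigenvalues i = c then (c : 𝕜) else 0 := by
    rcases hA.eigenvalues_eq_zero_or_eq_of_mul_self_eq_smul h i with hi | hi <;> simp [hi, hc.symm]
  rw [hA.trace_eq_sum_eigenvalues, sum_congr rfl fun i _ => hμ i, ← sum_filter,
    sum_const, nsmul_eq_mul, hA.rank_eq_card_eigenvalues_eq_of_mul_self_eq_smul h hc]

theorem charpoly_eq_of_mul_self_eq_smul (hA : A.IsHermitian)
    (h : A * A = (c : 𝕜) • A) (hc : c ≠ 0) :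
    A.charpoly = (X - C (c : 𝕜)) ^ A.rank * X ^ (Fintype.card ι - A.rank) := by
  have hfactor (i : ι) : X - C (hA.eigenvalues i : 𝕜) =
      if hA.eigenvalues i = c then X - C (c : 𝕜) else X := by
    rcases hA.eigenvalues_eq_zero_or_eq_of_mul_self_eq_smul h i with hi | hi <;> simp [hi, hc.symm]
  have hcard := card_filter_add_card_filter_not (s := univ)
    (fun i => hA.eigenvalues i = c)
  rw [hA.charpoly_eq, prod_congr rfl fun i _ => hfactor i, prod_ite,
    prod_const, prod_const, hA.rank_eq_card_eigenvalues_eq_of_mul_self_eq_smul h hc,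
    ← card_univ, ← hcard, Nat.add_sub_cancel_left]

end Matrix.IsHermitian

section

open Finset

section Sign

variable {ι : Type*} [LinearOrder ι]

def signBelow (s : Finset ι) (x : ι) : ℝ := (-1) ^ #{y ∈ s | y < x}

theorem signBelow_mul_self (s : Finset ι) (x : ι) : signBelow s x * signBelow s x = 1 := by
  rw [signBelow, ← mul_pow]; norm_num

theorem signBelow_insert {s : Finset ι} {x : ι} (hx : x ∉ s) (y : ι) :
    signBelow (insert x s) y = (if x < y then -1 else 1) * signBelow s y := by
  unfold signBelow
  rw [filter_insert]
  split_ifs with hxy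
  · rw [card_insert_of_notMem fun h => hx (mem_filter.1 h).1, pow_succ, mul_comm]
  · rw [one_mul]

theorem signBelow_mul_signBelow_insert_add_swap {s : Finset ι} {x y : ι} (hxy : x ≠ y)
    (hx : x ∉ s) (hy : y ∉ s) :
    signBelow s x * signBelow (insert x s) y + signBelow s y * signBelow (insert y s) x = 0 := by
  rw [signBelow_insert hx, signBelow_insert hy]
  rcases hxy.lt_or_gt with h | h <;> simp [h, h.not_gt] <;> ring

theorem signBelow_mul_signBelow_add_insert_mul_insert {s : Finset ι} {x y : ι} (hxy : x ≠ y)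
    (hx : x ∉ s) (hy : y ∉ s) :
    signBelow s x * signBelow s y + signBelow (insert x s) y * signBelow (insert y s) x = 0 := by
  rw [signBelow_insert hx, signBelow_insert hy]
  rcases hxy.lt_or_gt with h | h <;> simp [h, h.not_gt] <;> ring

end Sign

section Counting

variable {ι : Type*} [Fintype ι] [DecidableEq ι]

theorem card_filter_subset_eq_choose (k : ℕ) (t : Finset ι) :
    #{s : {s : Finset ι // s.card = k} | s.1 ⊆ t} = t.card.choose k := by
  rw [← card_powersetCard, ← card_map (Function.Embedding.subtype _)]
  congr 1
  ext u
  simp [mem_powersetCard, and_comm]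

theorem card_filter_superset_eq {k : ℕ} {s : Finset ι} (hs : s.card = k) :
    #{t : {t : Finset ι // t.card = k + 1} | s ⊆ t.1} = Fintype.card ι - k := by
  rw [← hs, ← card_compl]
  symm
  refine card_bij (fun x hx => ⟨insert x s, by rw [card_insert_of_notMem (mem_compl.1 hx), hs]⟩)
    (fun x _ => by simp [subset_insert]) (fun x hx y hy hxy => ?_) (fun t ht => ?_)
  · have hxy' : insert x s = insert y s := congrArg Subtype.val hxy
    have : x ∈ insert y s := hxy' ▸ mem_insert_self x s
    exact (mem_insert.1 this).resolve_right (mem_compl.1 hx)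
  · obtain ⟨x, hx, hxt⟩ := exists_eq_insert_iff.2 ⟨(mem_filter.1 ht).2, by rw [t.2, hs]⟩
    exact ⟨x, mem_compl.2 hx, Subtype.ext hxt⟩

end Counting

section BoundaryMatrix

variable {n d e : ℕ}

theorem Wj_apply_of_not_subset {α : {s : Finset (Fin n) // s.card = d}}
    {β : {s : Finset (Fin n) // s.card = d + 1}} (h : ¬α.1 ⊆ β.1) : Wj n d α β = 0 :=
  if_neg h

theorem Wj_apply_of_eq_insert {α : {s : Finset (Fin n) // s.card = d}}
    {β : {s : Finset (Fin n) // s.card = d + 1}} {x : Fin n} (hx : x ∉ α.1)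
    (hβ : β.1 = insert x α.1) : Wj n d α β = signBelow α.1 x := by
  rw [Wj, if_pos (hβ ▸ subset_insert x α.1), hβ, insert_sdiff_cancel hx]
  simp [signBelow, filter_insert]

theorem Wj_mul_self_apply (α : {s : Finset (Fin n) // s.card = d})
    (β : {s : Finset (Fin n) // s.card = d + 1}) :
    Wj n d α β * Wj n d α β = if α.1 ⊆ β.1 then 1 else 0 := by
  by_cases h : α.1 ⊆ β.1
  · obtain ⟨x, hx, hβ⟩ := exists_eq_insert_iff.2 ⟨h, by rw [α.2, β.2]⟩
    rw [Wj_apply_of_eq_insert hx hβ.symm, signBelow_mul_self, if_pos h]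
  · rw [Wj_apply_of_not_subset h, if_neg h, mul_zero]

theorem Wj_apply_mul_Wj_apply_of_not_subset {α : {s : Finset (Fin n) // s.card = d}}
    {β : {s : Finset (Fin n) // s.card = d + 1}} {α' : {s : Finset (Fin n) // s.card = e}}
    {β' : {s : Finset (Fin n) // s.card = e + 1}} (h : ¬(α.1 ⊆ β.1 ∧ α'.1 ⊆ β'.1)) :
    Wj n d α β * Wj n e α' β' = 0 := by
  rcases not_and_or.1 h with h | h <;> simp [Wj_apply_of_not_subset h]

theorem Wj_mul_Wj : Wj n d * Wj n (d + 1) = 0 := by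
  ext α γ
  rw [mul_apply, Matrix.zero_apply]
  by_cases hαγ : α.1 ⊆ γ.1
  swap
  · exact sum_eq_zero fun β _ => Wj_apply_mul_Wj_apply_of_not_subset
      fun h => hαγ (h.1.trans h.2)
  obtain ⟨x, y, hxy, hγα⟩ := card_eq_two.1 (by rw [card_sdiff_of_subset hαγ, α.2, γ.2]; omega :
    #(γ.1 \ α.1) = 2)
  have hx : x ∉ α.1 := (mem_sdiff.1 (hγα ▸ mem_insert_self x {y})).2
  have hy : y ∉ α.1 := (mem_sdiff.1 (hγα ▸ mem_insert_of_mem (mem_singleton_self y))).2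
  have hγ : γ.1 = insert x (insert y α.1) := by
    rw [← union_sdiff_of_subset hαγ, hγα, union_comm, insert_union, singleton_union]
  let β₁ : {s : Finset (Fin n) // s.card = d + 1} :=
    ⟨insert x α.1, by rw [card_insert_of_notMem hx, α.2]⟩
  let β₂ : {s : Finset (Fin n) // s.card = d + 1} :=
    ⟨insert y α.1, by rw [card_insert_of_notMem hy, α.2]⟩
  have hne : β₁ ≠ β₂ := fun h => by
    have h' : insert x α.1 = insert y α.1 := congrArg Subtype.val h
    exact hxy ((mem_insert.1 (h' ▸ mem_insert_self x α.1)).resolve_right hx)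
  have hyβ₁ : y ∉ β₁.1 := by simp [β₁, hxy.symm, hy]
  have hxβ₂ : x ∉ β₂.1 := by simp [β₂, hxy, hx]
  rw [Fintype.sum_eq_add β₁ β₂ hne]
  · rw [Wj_apply_of_eq_insert hx rfl, Wj_apply_of_eq_insert hy rfl,
      Wj_apply_of_eq_insert hyβ₁ (hγ.trans (insert_comm _ _ _)), Wj_apply_of_eq_insert hxβ₂ hγ]
    exact signBelow_mul_signBelow_insert_add_swap hxy hx hy
  · rintro β ⟨hβ₁, hβ₂⟩
    refine Wj_apply_mul_Wj_apply_of_not_subset fun ⟨hαβ, hβγ⟩ => ?_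
    obtain ⟨z, hz, hβ⟩ := exists_eq_insert_iff.2 ⟨hαβ, by rw [α.2, β.2]⟩
    have hzγ : z ∈ γ.1 \ α.1 := mem_sdiff.2 ⟨hβγ (hβ ▸ mem_insert_self z α.1), hz⟩
    rw [hγα, mem_insert, mem_singleton] at hzγ
    rcases hzγ with rfl | rfl
    · exact hβ₁ (Subtype.ext hβ.symm)
    · exact hβ₂ (Subtype.ext hβ.symm)

theorem transpose_Wj_mul_Wj_apply_self (β : {s : Finset (Fin n) // s.card = d + 1}) :
    ((Wj n d)ᵀ * Wj n d) β β = d + 1 := by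
  simp only [mul_apply, transpose_apply, Wj_mul_self_apply]
  rw [sum_boole, card_filter_subset_eq_choose, β.2, Nat.choose_succ_self_right, Nat.cast_succ]

theorem Wj_mul_transpose_Wj_apply_self (α : {s : Finset (Fin n) // s.card = d}) :
    (Wj n d * (Wj n d)ᵀ) α α = (n - d : ℕ) := by
  simp only [mul_apply, transpose_apply, Wj_mul_self_apply]
  rw [sum_boole, card_filter_superset_eq α.2, Fintype.card_fin]

def hodgeLaplacian (n d : ℕ) :
    Matrix {s : Finset (Fin n) // s.card = d + 1} {s : Finset (Fin n) // s.card = d + 1} ℝ :=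
  (Wj n d)ᵀ * Wj n d + Wj n (d + 1) * (Wj n (d + 1))ᵀ

theorem hodgeLaplacian_apply_self (β : {s : Finset (Fin n) // s.card = d + 1}) :
    hodgeLaplacian n d β β = n := by
  have hβ : d + 1 ≤ n := by simpa [β.2] using card_le_univ β.1
  rw [hodgeLaplacian, Matrix.add_apply, transpose_Wj_mul_Wj_apply_self,
    Wj_mul_transpose_Wj_apply_self]
  push_cast [Nat.cast_sub hβ]
  ring

theorem hodgeLaplacian_apply_of_eq_insert {A : {s : Finset (Fin n) // s.card = d}}
    {β β' : {s : Finset (Fin n) // s.card = d + 1}} {x y : Fin n} (hxy : x ≠ y)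
    (hx : x ∉ A.1) (hy : y ∉ A.1) (hβ : β.1 = insert x A.1) (hβ' : β'.1 = insert y A.1) :
    hodgeLaplacian n d β β' = 0 := by
  have hyβ : y ∉ β.1 := by simp [hβ, hxy.symm, hy]
  have hxβ' : x ∉ β'.1 := by simp [hβ', hxy, hx]
  let γ : {s : Finset (Fin n) // s.card = d + 1 + 1} :=
    ⟨insert y β.1, by rw [card_insert_of_notMem hyβ, β.2]⟩
  have hγ : γ.1 = insert x β'.1 := by simp only [γ, hβ, hβ', insert_comm]
  simp only [hodgeLaplacian, Matrix.add_apply, mul_apply, transpose_apply]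
  rw [Fintype.sum_eq_single A, Fintype.sum_eq_single γ]
  · rw [Wj_apply_of_eq_insert hx hβ, Wj_apply_of_eq_insert hy hβ', Wj_apply_of_eq_insert hyβ rfl,
      Wj_apply_of_eq_insert hxβ' hγ, hβ, hβ']
    exact signBelow_mul_signBelow_add_insert_mul_insert hxy hx hy
  · refine fun δ hδ => Wj_apply_mul_Wj_apply_of_not_subset fun ⟨hβδ, hβ'δ⟩ => hδ ?_
    have hγδ : γ.1 ⊆ δ.1 := insert_subset (hβ'δ (hβ' ▸ mem_insert_self y A.1)) hβδ
    exact Subtype.ext (eq_of_subset_of_card_le hγδ (by rw [γ.2, δ.2])).symm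
  · refine fun α hα => Wj_apply_mul_Wj_apply_of_not_subset fun ⟨hαβ, hαβ'⟩ => hα ?_
    have hαA : α.1 ⊆ A.1 := fun z hz => by
      have hzx := mem_insert.1 (hβ ▸ hαβ hz)
      have hzy := mem_insert.1 (hβ' ▸ hαβ' hz)
      rcases hzx with rfl | hzA
      · exact hzy.resolve_left hxy
      · exact hzA
    exact Subtype.ext (eq_of_subset_of_card_le hαA (by rw [α.2, A.2]))

theorem hodgeLaplacian_apply_of_ne {β β' : {s : Finset (Fin n) // s.card = d + 1}} (hne : β ≠ β') :
    hodgeLaplacian n d β β' = 0 := by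
  by_cases hcap : #(β.1 ∩ β'.1) = d
  · obtain ⟨x, hx, hβ⟩ := exists_eq_insert_iff.2 ⟨inter_subset_left, by rw [hcap, β.2]⟩
    obtain ⟨y, hy, hβ'⟩ := exists_eq_insert_iff.2 ⟨inter_subset_right, by rw [hcap, β'.2]⟩
    have hxy : x ≠ y := by
      rintro rfl
      exact hne (Subtype.ext (hβ.symm.trans hβ'))
    exact hodgeLaplacian_apply_of_eq_insert (A := ⟨_, hcap⟩) hxy hx hy hβ.symm hβ'.symm
  have hle : #(β.1 ∩ β'.1) ≤ d := by
    by_contra hgt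
    have hββ' : β.1 ⊆ β'.1 := inter_eq_left.1 <|
      eq_of_subset_of_card_le (inter_subset_left : β.1 ∩ β'.1 ⊆ β.1) (by rw [β.2]; omega)
    exact hne (Subtype.ext (eq_of_subset_of_card_le hββ' (by rw [β.2, β'.2])))
  simp only [hodgeLaplacian, Matrix.add_apply, mul_apply, transpose_apply]
  rw [sum_eq_zero, sum_eq_zero, add_zero]
  · refine fun γ _ => Wj_apply_mul_Wj_apply_of_not_subset fun ⟨hβγ, hβ'γ⟩ => ?_
    have := card_le_card (union_subset hβγ hβ'γ)
    have := card_union_add_card_inter β.1 β'.1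
    rw [β.2, β'.2, γ.2] at *
    omega
  · refine fun α _ => Wj_apply_mul_Wj_apply_of_not_subset fun ⟨hαβ, hαβ'⟩ => ?_
    have := card_le_card (subset_inter hαβ hαβ')
    rw [α.2] at this
    omega

theorem hodgeLaplacian_eq_smul_one :
    hodgeLaplacian n d = (n : ℝ) • 1 := by
  ext β β'
  rcases eq_or_ne β β' with rfl | hne
  · rw [hodgeLaplacian_apply_self]; simp
  · rw [hodgeLaplacian_apply_of_ne hne]; simp [hne]

theorem Pj_mul_self : Pj n d * Pj n d = (n : ℝ) • Pj n d := by
  have hWW : (Wj n d)ᵀ * Wj n d = (n : ℝ) • 1 - Wj n (d + 1) * (Wj n (d + 1))ᵀ :=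
    eq_sub_of_add_eq hodgeLaplacian_eq_smul_one
  calc Pj n d * Pj n d = Wj n d * ((Wj n d)ᵀ * Wj n d) * (Wj n d)ᵀ := by
        simp only [Pj, Matrix.mul_assoc]
    _ = (n : ℝ) • Pj n d - Wj n d * Wj n (d + 1) * (Wj n (d + 1))ᵀ * (Wj n d)ᵀ := by
        rw [hWW, Matrix.mul_sub, Matrix.sub_mul, Pj]
        simp only [Matrix.mul_smul, Matrix.smul_mul, Matrix.mul_one, Matrix.mul_assoc]
    _ = (n : ℝ) • Pj n d := by rw [Wj_mul_Wj, Matrix.zero_mul, Matrix.zero_mul, sub_zero]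

theorem trace_Pj : (Pj n d).trace = n * (n - 1).choose d := by
  have hchoose : n.choose d * (n - d) = (n - 1).choose d * n := by
    rcases n with _ | m
    · simp
    · simpa using (Nat.choose_mul_succ_eq m d).symm
  simp only [trace, diag_apply, Pj, Wj_mul_transpose_Wj_apply_self, sum_const, card_univ,
    Fintype.card_finset_len, Fintype.card_fin, nsmul_eq_mul]
  exact_mod_cast hchoose.trans (mul_comm _ _)

end BoundaryMatrix

end

/-- For all integers `d ≥ 1` and `n ≥ d + 1`, with
`P_{n,d} := W_{n,d}·W_{n,d}ᵀ`, one has `P² = n·P` and `rank(P) = C(n−1,d)`;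
consequently the eigenvalues of `P` are `n` with multiplicity `C(n−1,d)` and `0` with
multiplicity `C(n−1,d−1)` (stated via the characteristic polynomial). -/
theorem stmt_9 (n d : ℕ) (hd : 1 ≤ d) (hn : d + 1 ≤ n) :
    Pj n d * Pj n d = (n : ℝ) • Pj n d ∧
    (Pj n d).rank = (n - 1).choose d ∧
    (Pj n d).charpoly =
      (X - C (n : ℝ)) ^ ((n - 1).choose d) * X ^ ((n - 1).choose (d - 1)) := by
  have hP : (Pj n d).IsHermitian := by
    rw [Pj, ← conjTranspose_eq_transpose_of_trivial]
    exact isHermitian_mul_conjTranspose_self _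
  have hn₀ : (n : ℝ) ≠ 0 := Nat.cast_ne_zero.2 (by omega)
  have hrank : (Pj n d).rank = (n - 1).choose d := by
    have htrace := hP.trace_eq_rank_mul_of_mul_self_eq_smul Pj_mul_self hn₀
    rw [trace_Pj, mul_comm] at htrace
    exact_mod_cast mul_right_cancel₀ hn₀ htrace.symm
  have hpascal : n.choose d - (n - 1).choose d = (n - 1).choose (d - 1) := by
    obtain ⟨m, rfl⟩ : ∃ m, n = m + 1 := ⟨n - 1, by omega⟩
    obtain ⟨e, rfl⟩ : ∃ e, d = e + 1 := ⟨d - 1, by omega⟩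
    simp [Nat.choose_succ_succ]
  refine ⟨Pj_mul_self, hrank, ?_⟩
  rw [hP.charpoly_eq_of_mul_self_eq_smul Pj_mul_self hn₀, hrank, Fintype.card_finset_len,
    Fintype.card_fin, hpascal]
  rfl
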